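/- Define u₀ : B₁(0)∖{0} → ℝ on the punctured unit disk in ℝ² by u₀(x) = ln(1 − ln|x|). Then u₀ is smooth on 0 < |x| < 1 and satisfies −Δu₀(x) = |∇u₀(x)|² pointwise for all 0 < |x| < 1; explicitly, |∇u₀(x)|² = 1/(|x|²(1 − ln|x|)²) and Δu₀(x) = −1/(|x|²(1 − ln|x|)²). -/

import Mathlib

/-! Write `u₀ x = f (‖x‖²)` with `f s = log (1 - log s / 2)`, using the everywhere-smooth radial
variable `s = ‖x‖²`. For a radial function `∂ᵢ∂ᵢ u = 2 f'(s) + 4 xᵢ² f''(s)`, so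
`|∇u|² = 4 s f'(s)²` and `Δu = 2 n f'(s) + 4 s f''(s)`. With `f' s = -1 / (s (2 - log s))`, in
the plane both `|∇u₀|²` and `-Δu₀` come out as `4 / (s (2 - log s)²)`. -/

open MeasureTheory Set

noncomputable section

/-- Partial derivative of a scalar function on `ℝ²` in the `i`-th coordinate
direction. -/
def pd (i : Fin 2) (g : EuclideanSpace ℝ (Fin 2) → ℝ) :
    EuclideanSpace ℝ (Fin 2) → ℝ :=
  fun x => fderiv ℝ g x (EuclideanSpace.single i 1)

/-- Iterated spatial partial derivatives along a list of coordinate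
directions. -/
def pds (ι : List (Fin 2)) (g : EuclideanSpace ℝ (Fin 2) → ℝ) :
    EuclideanSpace ℝ (Fin 2) → ℝ :=
  ι.foldr pd g

open Real Filter Topology EuclideanSpace

section RadialFunction

variable {ι : Type*} [Fintype ι] {f f' : ℝ → ℝ} {x : EuclideanSpace ℝ ι}

theorem hasFDerivAt_comp_norm_sq {d : ℝ} (hf : HasDerivAt f d (‖x‖ ^ 2)) :
    HasFDerivAt (fun y : EuclideanSpace ℝ ι => f (‖y‖ ^ 2)) (d • (2 : ℕ) • innerSL ℝ x) x :=
  hf.comp_hasFDerivAt x (hasStrictFDerivAt_norm_sq x).hasFDerivAt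

variable [DecidableEq ι]

theorem fderiv_comp_norm_sq_single {d : ℝ} (hf : HasDerivAt f d (‖x‖ ^ 2)) (i : ι) :
    fderiv ℝ (fun y : EuclideanSpace ℝ ι => f (‖y‖ ^ 2)) x (single i 1) = d * (2 * x i) := by
  simp [(hasFDerivAt_comp_norm_sq hf).fderiv, inner_single_right]

theorem fderiv_fderiv_comp_norm_sq_single {d : ℝ}
    (hf : ∀ᶠ s in 𝓝 (‖x‖ ^ 2), HasDerivAt f (f' s) s) (hf' : HasDerivAt f' d (‖x‖ ^ 2))
    (i : ι) :
    fderiv ℝ (fun y => fderiv ℝ (fun z : EuclideanSpace ℝ ι => f (‖z‖ ^ 2)) y (single i 1)) x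
        (single i 1) = 2 * f' (‖x‖ ^ 2) + 4 * x i ^ 2 * d := by
  have hnear : ∀ᶠ y in 𝓝 x, HasDerivAt f (f' (‖y‖ ^ 2)) (‖y‖ ^ 2) :=
    (continuous_norm.pow 2).continuousAt.eventually hf
  have hfirst : (fun y => fderiv ℝ (fun z : EuclideanSpace ℝ ι => f (‖z‖ ^ 2)) y (single i 1))
      =ᶠ[𝓝 x] fun y => f' (‖y‖ ^ 2) * (2 * y i) :=
    hnear.mono fun y hy => fderiv_comp_norm_sq_single hy i
  have hcoord : HasFDerivAt (fun y : EuclideanSpace ℝ ι => 2 * y i) ((2 : ℝ) • proj i) x :=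
    (proj i : EuclideanSpace ℝ ι →L[ℝ] ℝ).hasFDerivAt.const_mul 2
  have hprod : HasFDerivAt (fun y => f' (‖y‖ ^ 2) * (2 * y i)) _ x :=
    (hasFDerivAt_comp_norm_sq hf').mul hcoord
  rw [hfirst.fderiv_eq, hprod.fderiv]
  simp only [add_apply, smul_apply, PiLp.proj_apply,
    PiLp.single_eq_same, smul_eq_mul, mul_one, coe_innerSL_apply, inner_single_right,
    RCLike.conj_to_real, one_mul, nsmul_eq_mul, Nat.cast_ofNat]
  ring

theorem sum_sq_fderiv_comp_norm_sq_single {d : ℝ} (hf : HasDerivAt f d (‖x‖ ^ 2)) :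
    ∑ i, (fderiv ℝ (fun y : EuclideanSpace ℝ ι => f (‖y‖ ^ 2)) x (single i 1)) ^ 2
      = 4 * ‖x‖ ^ 2 * d ^ 2 := by
  simp_rw [fderiv_comp_norm_sq_single hf]
  rw [real_norm_sq_eq, Finset.mul_sum, Finset.sum_mul]
  exact Finset.sum_congr rfl fun i _ => by ring

theorem sum_fderiv_fderiv_comp_norm_sq_single {d : ℝ}
    (hf : ∀ᶠ s in 𝓝 (‖x‖ ^ 2), HasDerivAt f (f' s) s) (hf' : HasDerivAt f' d (‖x‖ ^ 2)) :
    ∑ i, fderiv ℝ (fun y => fderiv ℝ (fun z : EuclideanSpace ℝ ι => f (‖z‖ ^ 2)) y (single i 1))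
        x (single i 1) = 2 * Fintype.card ι * f' (‖x‖ ^ 2) + 4 * ‖x‖ ^ 2 * d := by
  simp_rw [fderiv_fderiv_comp_norm_sq_single hf hf']
  rw [Finset.sum_add_distrib, real_norm_sq_eq, Finset.mul_sum, Finset.sum_mul, Finset.sum_const,
    Finset.card_univ, nsmul_eq_mul]
  ring

end RadialFunction

def logLogProfile (s : ℝ) : ℝ := log (1 - log s / 2)

theorem hasDerivAt_logLogProfile {s : ℝ} (hs : 0 < s) (hs₂ : log s ≠ 2) :
    HasDerivAt logLogProfile (-(s * (2 - log s))⁻¹) s := by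
  have hD : 2 - log s ≠ 0 := sub_ne_zero.mpr (Ne.symm hs₂)
  have h : HasDerivAt (fun t => log (1 - log t / 2)) (-(s⁻¹ / 2) / (1 - log s / 2)) s :=
    (((hasDerivAt_log hs.ne').div_const 2).const_sub 1).log (by contrapose! hD; linarith)
  exact h.congr_deriv (by field_simp)

theorem hasDerivAt_neg_inv_mul_two_sub_log {s : ℝ} (hs : 0 < s) (hs₂ : log s ≠ 2) :
    HasDerivAt (fun t => -(t * (2 - log t))⁻¹) ((1 - log s) / (s * (2 - log s)) ^ 2) s := by
  have hD : 2 - log s ≠ 0 := sub_ne_zero.mpr (Ne.symm hs₂)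
  have hprod : HasDerivAt (fun t => t * (2 - log t)) (1 * (2 - log s) + s * -s⁻¹) s :=
    (hasDerivAt_id' s).mul ((hasDerivAt_log hs.ne').const_sub 2)
  have h := (hprod.inv (mul_ne_zero hs.ne' hD)).neg
  exact h.congr_deriv (by field_simp; ring)

theorem eventually_hasDerivAt_logLogProfile {s : ℝ} (hs : 0 < s) (hs₂ : log s ≠ 2) :
    ∀ᶠ t in 𝓝 s, HasDerivAt logLogProfile (-(t * (2 - log t))⁻¹) t := by
  filter_upwards [Ioi_mem_nhds hs, (continuousAt_log hs.ne').eventually_ne hs₂] with t ht ht₂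
  exact hasDerivAt_logLogProfile ht ht₂

theorem contDiffAt_log_one_sub_log_norm {E : Type*} [NormedAddCommGroup E]
    [InnerProductSpace ℝ E] {n : WithTop ℕ∞} {x : E} (hx : x ≠ 0) (h : log ‖x‖ ≠ 1) :
    ContDiffAt ℝ n (fun y => log (1 - log ‖y‖)) x :=
  (contDiffAt_log.mpr (sub_ne_zero.mpr h.symm)).comp x
    (contDiffAt_const.sub ((contDiffAt_log.mpr (norm_ne_zero_iff.mpr hx)).comp x
      (contDiffAt_norm ℝ hx)))

/-- on the punctured unit disk in `ℝ²` the function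
`u₀(x) = ln(1 − ln|x|)` is smooth and satisfies `−Δu₀ = |∇u₀|²` pointwise, with
`|∇u₀|² = 1/(|x|²(1−ln|x|)²)` and `Δu₀ = −1/(|x|²(1−ln|x|)²)`. -/
theorem statement_15
    (u₀ : EuclideanSpace ℝ (Fin 2) → ℝ)
    (hu₀ : ∀ x, u₀ x = Real.log (1 - Real.log ‖x‖)) :
    ContDiffOn ℝ (⊤ : ℕ∞) u₀ {x : EuclideanSpace ℝ (Fin 2) | 0 < ‖x‖ ∧ ‖x‖ < 1} ∧
    ∀ x : EuclideanSpace ℝ (Fin 2), 0 < ‖x‖ → ‖x‖ < 1 →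
      (∑ i, (pd i u₀ x) ^ 2 = 1 / (‖x‖ ^ 2 * (1 - Real.log ‖x‖) ^ 2)) ∧
      (∑ i, pds [i, i] u₀ x = -(1 / (‖x‖ ^ 2 * (1 - Real.log ‖x‖) ^ 2))) ∧
      -(∑ i, pds [i, i] u₀ x) = ∑ i, (pd i u₀ x) ^ 2 := by
  have hu : u₀ = fun y => logLogProfile (‖y‖ ^ 2) := by
    funext y
    rw [hu₀, logLogProfile, log_pow]
    ring_nf
  refine ⟨fun x ⟨hx0, hx1⟩ => ?_, fun x hx0 hx1 => ?_⟩
  · rw [funext hu₀]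
    exact (contDiffAt_log_one_sub_log_norm (norm_pos_iff.mp hx0)
      (by linarith [log_neg hx0 hx1])).contDiffWithinAt
  have hs : 0 < ‖x‖ ^ 2 := by positivity
  have hlog : log (‖x‖ ^ 2) = 2 * log ‖x‖ := by rw [log_pow]; norm_num
  have hs₂ : log (‖x‖ ^ 2) ≠ 2 := by rw [hlog]; linarith [log_neg hx0 hx1]
  have hgrad : ∑ i, (pd i u₀ x) ^ 2 = 1 / (‖x‖ ^ 2 * (1 - log ‖x‖) ^ 2) := by
    rw [hu]
    refine (sum_sq_fderiv_comp_norm_sq_single (hasDerivAt_logLogProfile hs hs₂)).trans ?_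
    rw [hlog]
    field_simp
    ring
  have hlap : ∑ i, pds [i, i] u₀ x = -(1 / (‖x‖ ^ 2 * (1 - log ‖x‖) ^ 2)) := by
    rw [hu]
    refine (sum_fderiv_fderiv_comp_norm_sq_single (eventually_hasDerivAt_logLogProfile hs hs₂)
      (hasDerivAt_neg_inv_mul_two_sub_log hs hs₂)).trans ?_
    rw [hlog, Fintype.card_fin]
    field_simp
    ring
  exact ⟨hgrad, hlap, by rw [hgrad, hlap, neg_neg]⟩
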